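/- arXiv:2509.11936 — 6 statements merged into one kernel-verified Lean document; each statement's English description precedes it below -/
import Mathlib

section
/- Suppose α > 0 and μ + p ≥ 0. Then T(w,w) ≥ 0 for every null vector w ∈ V. (This is the Null Energy Condition for the pointwise stress-energy tensor of a φ-static perfect fluid space-time.) -/
open scoped RealInnerProductSpace

/-- Null Energy Condition for the pointwise stress-energy tensor of a φ-SPFST:
if `α > 0` and `μ + p ≥ 0`, then `T w w ≥ 0` for every null vector `w`. -/
theorem nec_of_mu_add_p_nonneg (m n : ℕ) (hm : 2 ≤ m) (hn : 1 ≤ n)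
    (α μ p U : ℝ)
    (L : EuclideanSpace ℝ (Fin m) →ₗ[ℝ] EuclideanSpace ℝ (Fin n))
    (nL : ℝ)
    (hnL : nL = ∑ i : Fin m, ‖L (EuclideanSpace.single i (1 : ℝ))‖ ^ 2)
    (gLor T : ℝ × EuclideanSpace ℝ (Fin m) → ℝ × EuclideanSpace ℝ (Fin m) → ℝ)
    (hg : ∀ w v, gLor w v = -(w.1 * v.1) + ⟪w.2, v.2⟫)
    (hT : ∀ w v, T w v = (μ + α * nL / 2 + U) * (w.1 * v.1)
        + (p - α * nL / 2 - U) * ⟪w.2, v.2⟫ + α * ⟪L w.2, L v.2⟫)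
    (hα : 0 < α) (hμp : 0 ≤ μ + p)
    (w : ℝ × EuclideanSpace ℝ (Fin m)) (hw : gLor w w = 0) :
    0 ≤ T w w := by
  rw [hg] at hw
  rw [hT]
  have h1 : ⟪w.2, w.2⟫ = w.1 * w.1 := by linarith
  have h2 : (0:ℝ) ≤ ⟪L w.2, L w.2⟫ := real_inner_self_nonneg
  rw [h1]
  nlinarith [mul_self_nonneg w.1]
end

section
/- Suppose α > 0, μ + p ≥ 0 and μ + α|L|²/2 + U ≥ 0. Then T(w,w) ≥ 0 for every timelike vector w ∈ V. (This is the Weak Energy Condition for the pointwise stress-energy tensor of a φ-static perfect fluid space-time.) -/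
open scoped RealInnerProductSpace

/-- Weak Energy Condition for the pointwise stress-energy tensor of a φ-SPFST:
if `α > 0`, `μ + p ≥ 0` and `μ + α|L|²/2 + U ≥ 0`, then `T w w ≥ 0` for every
timelike vector `w`. -/
theorem wec_of_nonneg (m n : ℕ) (hm : 2 ≤ m) (hn : 1 ≤ n)
    (α μ p U : ℝ)
    (L : EuclideanSpace ℝ (Fin m) →ₗ[ℝ] EuclideanSpace ℝ (Fin n))
    (nL : ℝ)
    (hnL : nL = ∑ i : Fin m, ‖L (EuclideanSpace.single i (1 : ℝ))‖ ^ 2)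
    (gLor T : ℝ × EuclideanSpace ℝ (Fin m) → ℝ × EuclideanSpace ℝ (Fin m) → ℝ)
    (hg : ∀ w v, gLor w v = -(w.1 * v.1) + ⟪w.2, v.2⟫)
    (hT : ∀ w v, T w v = (μ + α * nL / 2 + U) * (w.1 * v.1)
        + (p - α * nL / 2 - U) * ⟪w.2, v.2⟫ + α * ⟪L w.2, L v.2⟫)
    (hα : 0 < α) (hμp : 0 ≤ μ + p) (hwec : 0 ≤ μ + α * nL / 2 + U)
    (w : ℝ × EuclideanSpace ℝ (Fin m)) (hw : gLor w w < 0) :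
    0 ≤ T w w := by
  rw [hT]
  have h1 : -(w.1 * w.1) + ⟪w.2, w.2⟫ < 0 := by rw [← hg]; exact hw
  nlinarith [(real_inner_self_nonneg : (0:ℝ) ≤ ⟪w.2, w.2⟫),
    (real_inner_self_nonneg : (0:ℝ) ≤ ⟪L w.2, L w.2⟫),
    mul_nonneg hwec (by linarith : (0:ℝ) ≤ w.1 * w.1 - ⟪w.2, w.2⟫),
    mul_nonneg hμp ((real_inner_self_nonneg : (0:ℝ) ≤ ⟪w.2, w.2⟫)),
    mul_nonneg hα.le ((real_inner_self_nonneg : (0:ℝ) ≤ ⟪L w.2, L w.2⟫))]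
end

section
/- Suppose α > 0, μ + p ≥ 0 and (m−2)μ + mp ≥ 2U. Then T(w,w) ≥ (τ/(m−1))·ĝ(w,w) for every timelike vector w ∈ V, where τ is the ĝ-trace of T. (This is the Strong Energy Condition for the pointwise stress-energy tensor of a φ-static perfect fluid space-time.) -/
open scoped RealInnerProductSpace

/-- Strong Energy Condition for the pointwise stress-energy tensor of a φ-SPFST:
if `α > 0`, `μ + p ≥ 0` and `(m-2)μ + mp ≥ 2U`, then
`T w w ≥ (τ/(m-1)) · ĝ w w` for every timelike vector `w`, where `τ` is the
`ĝ`-trace of `T`. -/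
theorem sec_of_nonneg (m n : ℕ) (hm : 2 ≤ m) (hn : 1 ≤ n)
    (α μ p U : ℝ)
    (L : EuclideanSpace ℝ (Fin m) →ₗ[ℝ] EuclideanSpace ℝ (Fin n))
    (nL : ℝ)
    (hnL : nL = ∑ i : Fin m, ‖L (EuclideanSpace.single i (1 : ℝ))‖ ^ 2)
    (gLor T : ℝ × EuclideanSpace ℝ (Fin m) → ℝ × EuclideanSpace ℝ (Fin m) → ℝ)
    (hg : ∀ w v, gLor w v = -(w.1 * v.1) + ⟪w.2, v.2⟫)
    (hT : ∀ w v, T w v = (μ + α * nL / 2 + U) * (w.1 * v.1)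
        + (p - α * nL / 2 - U) * ⟪w.2, v.2⟫ + α * ⟪L w.2, L v.2⟫)
    (τ : ℝ)
    (hτ : τ = -(T (1, 0) (1, 0)) + ∑ i : Fin m,
        T (0, EuclideanSpace.single i (1 : ℝ)) (0, EuclideanSpace.single i (1 : ℝ)))
    (hα : 0 < α) (hμp : 0 ≤ μ + p)
    (hsec : 2 * U ≤ ((m : ℝ) - 2) * μ + (m : ℝ) * p)
    (w : ℝ × EuclideanSpace ℝ (Fin m)) (hw : gLor w w < 0) :
    τ / ((m : ℝ) - 1) * gLor w w ≤ T w w := by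
  have hτ' : τ = -(μ + α * nL / 2 + U) + ((m : ℝ) * (p - α * nL / 2 - U) + α * nL) := by
    have h1 : ∀ i : Fin m,
        ⟪(EuclideanSpace.single i (1:ℝ)), (EuclideanSpace.single i (1:ℝ))⟫ = (1:ℝ) := by
      intro i
      rw [real_inner_self_eq_norm_sq, EuclideanSpace.norm_single]
      norm_num
    have h2 : ∀ i : Fin m,
        ⟪L (EuclideanSpace.single i (1:ℝ)), L (EuclideanSpace.single i (1:ℝ))⟫
          = ‖L (EuclideanSpace.single i (1:ℝ))‖ ^ 2 := fun i =>
      real_inner_self_eq_norm_sq _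
    rw [hτ]
    congr 1
    · rw [hT]; simp
    · simp only [hT, h1, h2, mul_one, mul_zero, zero_mul, zero_add]
      rw [Finset.sum_add_distrib, Finset.sum_const, ← Finset.mul_sum, ← hnL]
      simp [nsmul_eq_mul]
  have hm1 : (0:ℝ) < (m : ℝ) - 1 := by
    have : (2:ℝ) ≤ (m:ℝ) := by exact_mod_cast hm
    linarith
  have hAc : 0 ≤ (μ + α * nL / 2 + U) + τ / ((m : ℝ) - 1) := by
    have heq : (μ + α * nL / 2 + U) + τ / ((m : ℝ) - 1)
        = (((m : ℝ) - 2) * μ + (m : ℝ) * p - 2 * U) / ((m : ℝ) - 1) := by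
      rw [hτ']; field_simp; ring
    rw [heq]
    apply div_nonneg _ hm1.le
    linarith
  rw [hg, hT]
  rw [hg] at hw
  have hx : ⟪w.2, w.2⟫ = ‖w.2‖ ^ 2 := real_inner_self_eq_norm_sq _
  have hLx : ⟪L w.2, L w.2⟫ = ‖L w.2‖ ^ 2 := real_inner_self_eq_norm_sq _
  rw [hx, hLx]
  rw [hx] at hw
  have h2 : 0 ≤ w.1 * w.1 - ‖w.2‖ ^ 2 := by linarith
  nlinarith [mul_nonneg hAc h2, mul_nonneg hμp (sq_nonneg ‖w.2‖),
    mul_nonneg hα.le (sq_nonneg ‖L w.2‖)]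
end

section
/- Suppose α > 0, U ≥ p and (μ + α|L|²/2 + U)² ≥ (p − α|L|²/2 − U)². Then ĝ(J_w, J_w) ≤ 0 for every timelike vector w ∈ V, where J_w is the flux vector of w. (This is the Flux Energy Condition for the pointwise stress-energy tensor of a φ-static perfect fluid space-time.) -/
set_option maxHeartbeats 800000


open scoped RealInnerProductSpace

/-- Flux Energy Condition for the pointwise stress-energy tensor of a φ-SPFST:
if `α > 0`, `U ≥ p` and `(μ + α|L|²/2 + U)² ≥ (p − α|L|²/2 − U)²`, then
`ĝ (J w) (J w) ≤ 0` for every timelike vector `w`, where `J w` is the flux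
vector of `w`. -/
theorem fec_of_nonneg (m n : ℕ) (hm : 2 ≤ m) (hn : 1 ≤ n)
    (α μ p U : ℝ)
    (L : EuclideanSpace ℝ (Fin m) →ₗ[ℝ] EuclideanSpace ℝ (Fin n))
    (nL : ℝ)
    (hnL : nL = ∑ i : Fin m, ‖L (EuclideanSpace.single i (1 : ℝ))‖ ^ 2)
    (gLor T : ℝ × EuclideanSpace ℝ (Fin m) → ℝ × EuclideanSpace ℝ (Fin m) → ℝ)
    (hg : ∀ w v, gLor w v = -(w.1 * v.1) + ⟪w.2, v.2⟫)
    (hT : ∀ w v, T w v = (μ + α * nL / 2 + U) * (w.1 * v.1)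
        + (p - α * nL / 2 - U) * ⟪w.2, v.2⟫ + α * ⟪L w.2, L v.2⟫)
    (J : ℝ × EuclideanSpace ℝ (Fin m) → ℝ × EuclideanSpace ℝ (Fin m))
    (hJ : ∀ w, J w = ((μ + α * nL / 2 + U) * w.1,
        (-(p - α * nL / 2 - U)) • w.2 - α • (LinearMap.adjoint L) (L w.2)))
    (hα : 0 < α) (hUp : p ≤ U)
    (hsq : (p - α * nL / 2 - U) ^ 2 ≤ (μ + α * nL / 2 + U) ^ 2)
    (w : ℝ × EuclideanSpace ℝ (Fin m)) (hw : gLor w w < 0) :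
    gLor (J w) (J w) ≤ 0 := by
  have hnL0 : 0 ≤ nL := by rw [hnL]; positivity
  -- key bound : ‖L† y‖² ≤ nL * ‖y‖²
  have key : ∀ y : EuclideanSpace ℝ (Fin n),
      ‖(LinearMap.adjoint L) y‖ ^ 2 ≤ nL * ‖y‖ ^ 2 := by
    intro y
    have h1 : ‖(LinearMap.adjoint L) y‖ ^ 2
        = ∑ i : Fin m, ((LinearMap.adjoint L) y i) ^ 2 := by
      rw [EuclideanSpace.norm_eq, Real.sq_sqrt (by positivity)]
      simp [sq_abs]
    have h2 : ∀ i : Fin m, ((LinearMap.adjoint L) y i) ^ 2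
        ≤ ‖L (EuclideanSpace.single i (1 : ℝ))‖ ^ 2 * ‖y‖ ^ 2 := by
      intro i
      have he : ((LinearMap.adjoint L) y) i
          = ⟪y, L (EuclideanSpace.single i (1 : ℝ))⟫ := by
        rw [← LinearMap.adjoint_inner_left]
        have := EuclideanSpace.inner_single_right (𝕜 := ℝ) i 1
          ((LinearMap.adjoint L) y)
        simp at this
        simpa [real_inner_comm] using this.symm
      rw [he]
      have h3 := abs_real_inner_le_norm y (L (EuclideanSpace.single i (1 : ℝ)))
      nlinarith [sq_abs ⟪y, L (EuclideanSpace.single i (1 : ℝ))⟫,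
        abs_nonneg ⟪y, L (EuclideanSpace.single i (1 : ℝ))⟫,
        norm_nonneg y, norm_nonneg (L (EuclideanSpace.single i (1 : ℝ)))]
    calc ‖(LinearMap.adjoint L) y‖ ^ 2
        = ∑ i : Fin m, ((LinearMap.adjoint L) y i) ^ 2 := h1
      _ ≤ ∑ i : Fin m, ‖L (EuclideanSpace.single i (1 : ℝ))‖ ^ 2 * ‖y‖ ^ 2 :=
          Finset.sum_le_sum fun i _ => h2 i
      _ = nL * ‖y‖ ^ 2 := by rw [← Finset.sum_mul, ← hnL]
  set a := μ + α * nL / 2 + U with ha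
  set c := p - α * nL / 2 - U with hc
  set x := w.2
  set z := (LinearMap.adjoint L) (L x) with hz
  have hxz : ⟪x, z⟫ = ‖L x‖ ^ 2 := by
    rw [hz, LinearMap.adjoint_inner_right, real_inner_self_eq_norm_sq]
  have hzz : ‖z‖ ^ 2 ≤ nL * ‖L x‖ ^ 2 := key (L x)
  have hw' : ‖x‖ ^ 2 < w.1 ^ 2 := by
    rw [hg] at hw
    nlinarith [real_inner_self_eq_norm_sq x]
  have hexp : gLor (J w) (J w) = -(a * w.1) ^ 2
      + (c ^ 2 * ‖x‖ ^ 2 + 2 * c * α * ‖L x‖ ^ 2 + α ^ 2 * ‖z‖ ^ 2) := by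
    rw [hg, hJ]
    simp only [← hz]
    rw [inner_sub_sub_self]
    simp only [inner_smul_left, inner_smul_right, RCLike.inner_apply,
      conj_trivial, real_inner_self_eq_norm_sq]
    have h4 : (inner ℝ z w.2 : ℝ) = ‖L x‖ ^ 2 := by rw [real_inner_comm]; exact hxz
    have h5 : (inner ℝ w.2 z : ℝ) = ‖L x‖ ^ 2 := hxz
    rw [h4, h5]; ring
  rw [hexp]
  have hc' : c ≤ -(α * nL / 2) := by nlinarith
  have hLx : 0 ≤ ‖L x‖ ^ 2 := by positivity
  have e1 : α ^ 2 * ‖z‖ ^ 2 ≤ α ^ 2 * (nL * ‖L x‖ ^ 2) :=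
    mul_le_mul_of_nonneg_left hzz (by positivity)
  have e2 : 2 * c * α * ‖L x‖ ^ 2 ≤ -(α ^ 2 * (nL * ‖L x‖ ^ 2)) := by
    have := mul_le_mul_of_nonneg_right hc'
      (mul_nonneg (mul_nonneg (by norm_num : (0:ℝ) ≤ 2) hα.le) hLx)
    ring_nf at this ⊢
    linarith
  have e3 : c ^ 2 * ‖x‖ ^ 2 ≤ a ^ 2 * ‖x‖ ^ 2 :=
    mul_le_mul_of_nonneg_right hsq (sq_nonneg ‖x‖)
  have e4 : a ^ 2 * ‖x‖ ^ 2 ≤ a ^ 2 * w.1 ^ 2 :=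
    mul_le_mul_of_nonneg_left hw'.le (sq_nonneg a)
  nlinarith [e1, e2, e3, e4]
end

section
/- Suppose α > 0, U ≥ p, μ + p ≥ 0 and μ + α|L|²/2 + U ≥ 0. Then for every timelike vector w ∈ V one has both T(w,w) ≥ 0 and ĝ(J_w, J_w) ≤ 0, where J_w is the flux vector of w. (This is the Dominant Energy Condition for the pointwise stress-energy tensor of a φ-static perfect fluid space-time.) -/
open scoped RealInnerProductSpace

lemma adjoint_sq_le (m n : ℕ)
    (L : EuclideanSpace ℝ (Fin m) →ₗ[ℝ] EuclideanSpace ℝ (Fin n))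
    (y : EuclideanSpace ℝ (Fin n)) :
    ‖(LinearMap.adjoint L) y‖ ^ 2
      ≤ (∑ i : Fin m, ‖L (EuclideanSpace.single i (1 : ℝ))‖ ^ 2) * ‖y‖ ^ 2 := by
  have h1 : ‖(LinearMap.adjoint L) y‖ ^ 2
      = ∑ i : Fin m, ⟪y, L (EuclideanSpace.single i (1 : ℝ))⟫ ^ 2 := by
    rw [EuclideanSpace.norm_eq, Real.sq_sqrt (by positivity)]
    refine Finset.sum_congr rfl fun i _ => ?_
    have : ((LinearMap.adjoint L) y) i
        = ⟪(LinearMap.adjoint L) y, EuclideanSpace.single i (1 : ℝ)⟫ := by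
      simp [EuclideanSpace.inner_single_right]
    rw [Real.norm_eq_abs, sq_abs, this, LinearMap.adjoint_inner_left]
  rw [h1, Finset.sum_mul]
  refine Finset.sum_le_sum fun i _ => ?_
  have := abs_real_inner_le_norm y (L (EuclideanSpace.single i (1 : ℝ)))
  calc ⟪y, L (EuclideanSpace.single i (1 : ℝ))⟫ ^ 2
      = |⟪y, L (EuclideanSpace.single i (1 : ℝ))⟫| ^ 2 := (sq_abs _).symm
    _ ≤ (‖y‖ * ‖L (EuclideanSpace.single i (1 : ℝ))‖) ^ 2 := by
        apply pow_le_pow_left₀ (abs_nonneg _) this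
    _ = ‖L (EuclideanSpace.single i (1 : ℝ))‖ ^ 2 * ‖y‖ ^ 2 := by ring

/-- Dominant Energy Condition for the pointwise stress-energy tensor of a φ-SPFST:
if `α > 0`, `U ≥ p`, `μ + p ≥ 0` and `μ + α|L|²/2 + U ≥ 0`, then for every
timelike vector `w` one has `T w w ≥ 0` and `ĝ (J w) (J w) ≤ 0`. -/
theorem dec_of_nonneg (m n : ℕ) (hm : 2 ≤ m) (hn : 1 ≤ n)
    (α μ p U : ℝ)
    (L : EuclideanSpace ℝ (Fin m) →ₗ[ℝ] EuclideanSpace ℝ (Fin n))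
    (nL : ℝ)
    (hnL : nL = ∑ i : Fin m, ‖L (EuclideanSpace.single i (1 : ℝ))‖ ^ 2)
    (gLor T : ℝ × EuclideanSpace ℝ (Fin m) → ℝ × EuclideanSpace ℝ (Fin m) → ℝ)
    (hg : ∀ w v, gLor w v = -(w.1 * v.1) + ⟪w.2, v.2⟫)
    (hT : ∀ w v, T w v = (μ + α * nL / 2 + U) * (w.1 * v.1)
        + (p - α * nL / 2 - U) * ⟪w.2, v.2⟫ + α * ⟪L w.2, L v.2⟫)
    (J : ℝ × EuclideanSpace ℝ (Fin m) → ℝ × EuclideanSpace ℝ (Fin m))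
    (hJ : ∀ w, J w = ((μ + α * nL / 2 + U) * w.1,
        (-(p - α * nL / 2 - U)) • w.2 - α • (LinearMap.adjoint L) (L w.2)))
    (hα : 0 < α) (hUp : p ≤ U) (hμp : 0 ≤ μ + p)
    (hwec : 0 ≤ μ + α * nL / 2 + U)
    (w : ℝ × EuclideanSpace ℝ (Fin m)) (hw : gLor w w < 0) :
    0 ≤ T w w ∧ gLor (J w) (J w) ≤ 0 := by
  have hnL0 : 0 ≤ nL := by rw [hnL]; positivity
  have hxx : ⟪w.2, w.2⟫ = ‖w.2‖ ^ 2 := real_inner_self_eq_norm_sq _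
  have hLL : ⟪L w.2, L w.2⟫ = ‖L w.2‖ ^ 2 := real_inner_self_eq_norm_sq _
  have ht : ‖w.2‖ ^ 2 < w.1 * w.1 := by
    have := hw; rw [hg, hxx] at this; linarith
  have hx0 : 0 ≤ ‖w.2‖ ^ 2 := by positivity
  have hL0 : 0 ≤ ‖L w.2‖ ^ 2 := by positivity
  obtain ⟨a, ha⟩ : ∃ a, a = μ + α * nL / 2 + U := ⟨_, rfl⟩
  obtain ⟨c, hc⟩ : ∃ c, c = α * nL / 2 + U - p := ⟨_, rfl⟩
  rw [← ha] at hwec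
  have hc0 : α * nL / 2 ≤ c := by rw [hc]; linarith
  have hc00 : (0:ℝ) ≤ c := le_trans (by positivity) hc0
  have hac : c ≤ a := by rw [ha, hc]; linarith
  constructor
  · rw [hT, hxx, hLL]
    have h0 : p - α * nL / 2 - U = -c := by rw [hc]; ring
    have h0a : μ + α * nL / 2 + U = a := ha.symm
    rw [h0, h0a]
    nlinarith [mul_le_mul_of_nonneg_left ht.le hwec,
      mul_nonneg (sub_nonneg.2 hac) hx0, mul_nonneg hα.le hL0]
  · have hadj := adjoint_sq_le m n L (L w.2)
    rw [← hnL] at hadj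
    have hcc : -(p - α * nL / 2 - U) = c := by rw [hc]; ring
    have h0a : μ + α * nL / 2 + U = a := ha.symm
    have hinner : ⟪w.2, (LinearMap.adjoint L) (L w.2)⟫ = ‖L w.2‖ ^ 2 := by
      rw [LinearMap.adjoint_inner_right, hLL]
    have hs : ⟪(J w).2, (J w).2⟫
        = c ^ 2 * ‖w.2‖ ^ 2 - 2 * c * α * ‖L w.2‖ ^ 2
          + α ^ 2 * ‖(LinearMap.adjoint L) (L w.2)‖ ^ 2 := by
      rw [hJ, hcc]
      rw [real_inner_self_eq_norm_sq, norm_sub_sq_real, norm_smul, norm_smul,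
        real_inner_smul_left, real_inner_smul_right, hinner,
        Real.norm_eq_abs, Real.norm_eq_abs]
      simp only [mul_pow, sq_abs]
      ring
    have h1 : α ^ 2 * ‖(LinearMap.adjoint L) (L w.2)‖ ^ 2
        ≤ 2 * c * α * ‖L w.2‖ ^ 2 := by
      nlinarith [mul_le_mul_of_nonneg_left hadj (sq_nonneg α),
        mul_nonneg (mul_nonneg hα.le hL0) (by linarith : (0:ℝ) ≤ 2 * c - α * nL)]
    have h2 : c ^ 2 * ‖w.2‖ ^ 2 ≤ (a * w.1) * (a * w.1) := by
      nlinarith [mul_le_mul hac hac hc00 hwec,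
        mul_le_mul_of_nonneg_left ht.le (mul_nonneg hwec hwec),
        mul_le_mul_of_nonneg_right (mul_le_mul hac hac hc00 hwec) hx0]
    rw [hg, hs, hJ]
    dsimp only
    rw [h0a]
    linarith [h1, h2]
end

section
/- (No sign restriction on α is needed.) (i) If T(w,w) ≥ 0 for every timelike vector w ∈ V, then μ + α|L|²/2 + U ≥ 0; that is, this inequality is necessary for the Weak Energy Condition. (ii) If T(w,w) ≥ (τ/(m−1))·ĝ(w,w) for every timelike vector w ∈ V, where τ is the ĝ-trace of T, then (m−2)μ + mp ≥ 2U; that is, this inequality is necessary for the Strong Energy Condition. -/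
open scoped RealInnerProductSpace

/-- Necessity of `μ + α|L|²/2 + U ≥ 0` for the Weak Energy Condition and of
`(m-2)μ + mp ≥ 2U` for the Strong Energy Condition (no sign restriction on `α`). -/
theorem necessary_conditions_wec_sec (m n : ℕ) (hm : 2 ≤ m) (hn : 1 ≤ n)
    (α μ p U : ℝ)
    (L : EuclideanSpace ℝ (Fin m) →ₗ[ℝ] EuclideanSpace ℝ (Fin n))
    (nL : ℝ)
    (hnL : nL = ∑ i : Fin m, ‖L (EuclideanSpace.single i (1 : ℝ))‖ ^ 2)
    (gLor T : ℝ × EuclideanSpace ℝ (Fin m) → ℝ × EuclideanSpace ℝ (Fin m) → ℝ)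
    (hg : ∀ w v, gLor w v = -(w.1 * v.1) + ⟪w.2, v.2⟫)
    (hT : ∀ w v, T w v = (μ + α * nL / 2 + U) * (w.1 * v.1)
        + (p - α * nL / 2 - U) * ⟪w.2, v.2⟫ + α * ⟪L w.2, L v.2⟫)
    (τ : ℝ)
    (hτ : τ = -(T (1, 0) (1, 0)) + ∑ i : Fin m,
        T (0, EuclideanSpace.single i (1 : ℝ)) (0, EuclideanSpace.single i (1 : ℝ))) :
    ((∀ w : ℝ × EuclideanSpace ℝ (Fin m), gLor w w < 0 → 0 ≤ T w w) →
        0 ≤ μ + α * nL / 2 + U) ∧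
    ((∀ w : ℝ × EuclideanSpace ℝ (Fin m), gLor w w < 0 →
        τ / ((m : ℝ) - 1) * gLor w w ≤ T w w) →
        2 * U ≤ ((m : ℝ) - 2) * μ + (m : ℝ) * p) := by

  have hgw : gLor (1, 0) (1, 0) = -1 := by
    rw [hg]; simp
  have hTw : T (1, 0) (1, 0) = μ + α * nL / 2 + U := by
    rw [hT]; simp
  have hτ' : τ = -μ + m * p - (m + 1) * U + α * nL * (1 - m) / 2 := by
    have hsum : ∀ i : Fin m,
        T (0, EuclideanSpace.single i (1 : ℝ)) (0, EuclideanSpace.single i (1 : ℝ))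
          = (p - α * nL / 2 - U) + α * ‖L (EuclideanSpace.single i (1 : ℝ))‖ ^ 2 := by
      intro i
      rw [hT]
      have h1 : ⟪(EuclideanSpace.single i (1 : ℝ)), (EuclideanSpace.single i (1 : ℝ))⟫ = 1 := by
        simp [EuclideanSpace.inner_single_right]
      have h2 : ⟪L (EuclideanSpace.single i (1 : ℝ)), L (EuclideanSpace.single i (1 : ℝ))⟫
          = ‖L (EuclideanSpace.single i (1 : ℝ))‖ ^ 2 := by
        rw [real_inner_self_eq_norm_sq]
      simp only [h1, h2]
      ring
    rw [hτ, hTw]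
    simp only [hsum]
    rw [Finset.sum_add_distrib, Finset.sum_const, ← Finset.mul_sum, ← hnL]
    simp only [Finset.card_univ, Fintype.card_fin, nsmul_eq_mul]
    ring
  constructor
  · intro h
    have := h (1, 0) (by rw [hgw]; norm_num)
    rwa [hTw] at this
  · intro h
    have hm1 : (0 : ℝ) < (m : ℝ) - 1 := by
      have : (2 : ℝ) ≤ (m : ℝ) := by exact_mod_cast hm
      linarith
    have := h (1, 0) (by rw [hgw]; norm_num)
    rw [hTw, hgw] at this
    have h2 : -τ ≤ ((m : ℝ) - 1) * (μ + α * nL / 2 + U) := by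
      have := mul_le_mul_of_nonneg_left this (le_of_lt hm1)
      rw [mul_comm ((m:ℝ)-1) (τ / ((m : ℝ) - 1) * -1)] at this
      calc -τ = τ / ((m : ℝ) - 1) * -1 * ((m : ℝ) - 1) := by
            field_simp
        _ ≤ _ := this
    rw [hτ'] at h2
    nlinarith [h2]
end
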